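/- arXiv:2406.15713 — 7 statements merged into one kernel-verified Lean document; each statement's English description precedes it below -/
import Mathlib

section
/- In the algorithmic setting described in the context, for every k ≥ 0 one has H(X^k, X^{k−1}, ε^k) − H(X^{k+1}, X^k, ε^{k+1}) ≥ C ‖X^k − X^{k−1}‖_F², where C = (β/2)(1 − ((3L_f + β)/β) ᾱ²) > 0. Consequently the sequence {H(X^k, X^{k−1}, ε^k)} is monotonically nonincreasing and, being bounded below, converges. -/
open Filter Topology Matrix

/-- The singular values of a real `m × n` matrix (`m ≤ n`), in nonincreasing order:
`sval X i` is the `(i+1)`-th largest singular value of `X`. -/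
noncomputable def sval {m n : ℕ} (X : Matrix (Fin m) (Fin n) ℝ) : Fin m → ℝ :=
  fun i =>
    let ev : Fin m → ℝ := (Matrix.isHermitian_mul_conjTranspose_self X).eigenvalues
    Real.sqrt (ev (Tuple.sort ev i.rev))

/-- The `m × n` matrix with the vector `d` on its main diagonal and zeros elsewhere. -/
def rdiag {m n : ℕ} (d : Fin m → ℝ) : Matrix (Fin m) (Fin n) ℝ :=
  Matrix.of fun i j => if (j : ℕ) = (i : ℕ) then d i else 0

/-- The Frobenius norm of a matrix. -/
noncomputable def frobNorm {m n : ℕ} (X : Matrix (Fin m) (Fin n) ℝ) : ℝ :=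
  Real.sqrt (∑ i, ∑ j, (X i j) ^ 2)

/-- The Frobenius (trace) inner product of two matrices. -/
def finner {m n : ℕ} (A B : Matrix (Fin m) (Fin n) ℝ) : ℝ :=
  ∑ i, ∑ j, A i j * B i j

/-- `G` is the (Fréchet) gradient of `f : ℝ^{m×n} → ℝ` at `X`, with respect to the
Frobenius inner product. -/
def HasFrobGradientAt {m n : ℕ} (f : Matrix (Fin m) (Fin n) ℝ → ℝ)
    (G X : Matrix (Fin m) (Fin n) ℝ) : Prop :=
  Filter.Tendsto
    (fun H : Matrix (Fin m) (Fin n) ℝ => |f (X + H) - f X - finner G H| / frobNorm H)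
    (nhdsWithin 0 {0}ᶜ) (nhds 0)

/-!
The descent lemma for the `L_f`-smooth `f`, applied at the extrapolated point `Y^k`, bounds
`f(X^{k+1})` from above and `f(X^k)` from below. Comparing the model `L` at its minimiser `X^{k+1}`
with its value at `X^k`, and using that by concavity of `t ↦ t^p` the reweighted term
`∑ wᵢ σᵢ` majorises the change of `∑ (σᵢ + εᵢ)^p` (with `ε` nonincreasing), gives
`H_k − H_{k+1} ≥ (β/2 − (L_f + β) α_k²/2) ‖X^k − X^{k−1}‖_F² ≥ C ‖X^k − X^{k−1}‖_F²`.
Level-boundedness keeps the iterates in a ball, on which the descent lemma bounds `f` below,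
so the nonincreasing sequence `H_k` converges.
-/

open scoped RealInnerProductSpace

theorem Real.rpow_le_rpow_add_mul_sub {p u v : ℝ} (hp0 : 0 ≤ p) (hp1 : p ≤ 1) (hu : 0 < u)
    (hv : 0 ≤ v) : v ^ p ≤ u ^ p + p * u ^ (p - 1) * (v - u) := by
  have hamgm := Real.geom_mean_le_arith_mean2_weighted hp0 (sub_nonneg.2 hp1) hv hu.le
    (add_sub_cancel p 1)
  have hmul : u ^ (p - 1) * u = u ^ p := by rw [← Real.rpow_add_one hu.ne', sub_add_cancel]
  have hcancel : u ^ (p - 1) * u ^ (1 - p) = 1 := by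
    rw [← Real.rpow_add hu, sub_add_sub_cancel', sub_self, Real.rpow_zero]
  calc v ^ p = u ^ (p - 1) * (v ^ p * u ^ (1 - p)) := by rw [mul_left_comm, hcancel, mul_one]
    _ ≤ u ^ (p - 1) * (p * v + (1 - p) * u) := by gcongr
    _ = u ^ p + p * u ^ (p - 1) * (v - u) := by linear_combination hmul

theorem sum_rpow_add_le_of_reweighting {ι : Type*} [Fintype ι] {p : ℝ} (hp0 : 0 ≤ p) (hp1 : p ≤ 1)
    {s t e e' : ι → ℝ} (hs : ∀ i, 0 ≤ s i) (ht : ∀ i, 0 ≤ t i) (he : ∀ i, 0 < e i)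
    (he' : ∀ i, 0 ≤ e' i) (hle : ∀ i, e' i ≤ e i) :
    ∑ i, (t i + e' i) ^ p ≤ ∑ i, (s i + e i) ^ p
      + (∑ i, p * (s i + e i) ^ (p - 1) * t i - ∑ i, p * (s i + e i) ^ (p - 1) * s i) := by
  rw [← Finset.sum_sub_distrib, ← Finset.sum_add_distrib]
  gcongr with i
  have hu : 0 < s i + e i := add_pos_of_nonneg_of_pos (hs i) (he i)
  have hw : 0 ≤ p * (s i + e i) ^ (p - 1) := by positivity
  linear_combination Real.rpow_le_rpow_add_mul_sub hp0 hp1 hu (add_nonneg (ht i) (he' i))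
    + mul_le_mul_of_nonneg_left (hle i) hw

section Descent

variable {E : Type*} [NormedAddCommGroup E] [InnerProductSpace ℝ E] [CompleteSpace E]

theorem abs_sub_sub_inner_le_of_lipschitz_gradient
    {f : E → ℝ} {g : E → E} {L : ℝ}
    (hf : ∀ x, HasGradientAt f (g x) x) (hg : ∀ x y, ‖g x - g y‖ ≤ L * ‖x - y‖) (x y : E) :
    |f y - f x - ⟪g x, y - x⟫| ≤ L / 2 * ‖y - x‖ ^ 2 := by
  set v := y - x
  have hderiv : ∀ t : ℝ, HasDerivAt (fun t => f (x + t • v) - f x - t * ⟪g x, v⟫)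
      (⟪g (x + t • v), v⟫ - ⟪g x, v⟫) t := by
    intro t
    have hline : HasDerivAt (fun t : ℝ => x + t • v) v t := by
      simpa using ((hasDerivAt_id t).smul_const v).const_add x
    have hcomp : HasDerivAt (fun t => f (x + t • v)) ⟪g (x + t • v), v⟫ t := by
      have := (hf (x + t • v)).hasFDerivAt.comp_hasDerivAt t hline
      simp only [InnerProductSpace.toDual_apply_apply] at this
      exact this
    exact (hcomp.sub_const (f x)).sub (by simpa using (hasDerivAt_id t).mul_const ⟪g x, v⟫)
  have hbound : ∀ t : ℝ, HasDerivAt (fun t => L / 2 * ‖v‖ ^ 2 * t ^ 2) (L * ‖v‖ ^ 2 * t) t := by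
    intro t
    exact ((hasDerivAt_pow 2 t).const_mul _).congr_deriv (by norm_num; ring)
  have := image_norm_le_of_norm_deriv_right_le_deriv_boundary
    (fun t _ => (hderiv t).continuousAt.continuousWithinAt)
    (fun t _ => (hderiv t).hasDerivWithinAt) (B := fun t => L / 2 * ‖v‖ ^ 2 * t ^ 2)
    (by simp) hbound ?_ (Set.right_mem_Icc.2 zero_le_one)
  · simpa [v] using this
  intro t ht
  rw [← inner_sub_left, Real.norm_eq_abs]
  calc |⟪g (x + t • v) - g x, v⟫| ≤ ‖g (x + t • v) - g x‖ * ‖v‖ := abs_real_inner_le_norm _ _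
    _ ≤ L * ‖t • v‖ * ‖v‖ := by gcongr; simpa using hg (x + t • v) x
    _ = L * ‖v‖ ^ 2 * t := by rw [norm_smul, Real.norm_of_nonneg ht.1]; ring

end Descent

section Frobenius

variable {m n : ℕ}

noncomputable def frobEquiv : Matrix (Fin m) (Fin n) ℝ ≃ₗ[ℝ] EuclideanSpace ℝ (Fin m × Fin n) :=
  (LinearEquiv.curry ℝ ℝ (Fin m) (Fin n)).symm.trans (WithLp.linearEquiv 2 ℝ _).symm

@[simp] lemma frobEquiv_apply (X : Matrix (Fin m) (Fin n) ℝ) (q : Fin m × Fin n) :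
    frobEquiv X q = X q.1 q.2 := rfl

lemma frobNorm_eq_norm (X : Matrix (Fin m) (Fin n) ℝ) : frobNorm X = ‖frobEquiv X‖ := by
  simp [frobNorm, EuclideanSpace.norm_eq, Fintype.sum_prod_type]

lemma finner_eq_inner (A B : Matrix (Fin m) (Fin n) ℝ) :
    finner A B = ⟪frobEquiv A, frobEquiv B⟫ := by
  simp [finner, PiLp.inner_apply, Fintype.sum_prod_type, mul_comm]

lemma HasFrobGradientAt.hasGradientAt {f : Matrix (Fin m) (Fin n) ℝ → ℝ}
    {G X : Matrix (Fin m) (Fin n) ℝ} (h : HasFrobGradientAt f G X) :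
    HasGradientAt (f ∘ frobEquiv.symm) (frobEquiv G) (frobEquiv X) := by
  have h0 : ContinuousAt
      (fun H : Matrix (Fin m) (Fin n) ℝ => |f (X + H) - f X - finner G H| / frobNorm H) 0 := by
    -- the quotient vanishes at `H = 0` (division by zero), so the punctured limit is continuity
    have hg0 : |f (X + 0) - f X - finner G 0| / frobNorm (0 : Matrix (Fin m) (Fin n) ℝ) = 0 := by
      simp [frobNorm]
    rw [← continuousWithinAt_compl_self, ContinuousWithinAt, hg0]
    exact h
  have hmap : Tendsto (fun x => frobEquiv.symm x - X) (𝓝 (frobEquiv X)) (𝓝 0) :=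
    ((LinearMap.continuous_of_finiteDimensional frobEquiv.symm.toLinearMap).sub
      continuous_const).tendsto' _ _ (by simp)
  rw [hasGradientAt_iff_tendsto]
  convert h0.tendsto.comp hmap using 2 with x
  · simp [frobNorm_eq_norm, finner_eq_inner, div_eq_inv_mul]
  · simp [frobNorm]

lemma sval_nonneg (X : Matrix (Fin m) (Fin n) ℝ) (i : Fin m) : 0 ≤ sval X i :=
  Real.sqrt_nonneg _

-- `merit f β lam p A B e` is the paper's `H(A, B, e)`.
noncomputable def merit (f : Matrix (Fin m) (Fin n) ℝ → ℝ) (β lam p : ℝ)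
    (A B : Matrix (Fin m) (Fin n) ℝ) (e : Fin m → ℝ) : ℝ :=
  f A + β / 2 * frobNorm (A - B) ^ 2 + lam * ∑ i, (sval A i + e i) ^ p

-- The paper's model `L`, minimised by `X^{k+1}`, for `Xk = X^k`, `Yk = Y^k`, `ek = ε^k`.
noncomputable def surrogate (f : Matrix (Fin m) (Fin n) ℝ → ℝ)
    (Gf : Matrix (Fin m) (Fin n) ℝ → Matrix (Fin m) (Fin n) ℝ) (β lam p : ℝ)
    (Xk Yk : Matrix (Fin m) (Fin n) ℝ) (ek : Fin m → ℝ) (Z : Matrix (Fin m) (Fin n) ℝ) : ℝ :=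
  f Yk + finner Z (Gf Yk) + β / 2 * frobNorm (Z - Yk) ^ 2 + β / 2 * frobNorm (Z - Xk) ^ 2
    + lam * ∑ i, (p * (sval Xk i + ek i) ^ (p - 1)) * sval Z i

section Smooth

variable {f : Matrix (Fin m) (Fin n) ℝ → ℝ}
  {Gf : Matrix (Fin m) (Fin n) ℝ → Matrix (Fin m) (Fin n) ℝ} {Lf β lam p : ℝ}

theorem abs_sub_sub_finner_le (hgrad : ∀ Z, HasFrobGradientAt f (Gf Z) Z)
    (hlip : ∀ Z W, frobNorm (Gf Z - Gf W) ≤ Lf * frobNorm (Z - W))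
    (Y A : Matrix (Fin m) (Fin n) ℝ) :
    |f A - f Y - finner (Gf Y) (A - Y)| ≤ Lf / 2 * frobNorm (A - Y) ^ 2 := by
  have := abs_sub_sub_inner_le_of_lipschitz_gradient (f := f ∘ frobEquiv.symm)
    (g := fun x => frobEquiv (Gf (frobEquiv.symm x)))
    (fun x => by simpa using (hgrad (frobEquiv.symm x)).hasGradientAt)
    (fun x y => by simpa [frobNorm_eq_norm] using hlip (frobEquiv.symm x) (frobEquiv.symm y))
    (frobEquiv Y) (frobEquiv A)
  simpa [frobNorm_eq_norm, finner_eq_inner] using this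

theorem bddBelow_image_frobNorm_le (hgrad : ∀ Z, HasFrobGradientAt f (Gf Z) Z)
    (hlip : ∀ Z W, frobNorm (Gf Z - Gf W) ≤ Lf * frobNorm (Z - W)) (hLf : 0 ≤ Lf) (R : ℝ) :
    BddBelow (f '' {Z | frobNorm Z ≤ R}) := by
  refine ⟨f 0 - frobNorm (Gf 0) * R - Lf / 2 * R ^ 2, ?_⟩
  rintro _ ⟨Z, hZ : frobNorm Z ≤ R, rfl⟩
  have hdesc := (abs_le.1 (abs_sub_sub_finner_le hgrad hlip 0 Z)).1
  have hinner : |finner (Gf 0) Z| ≤ frobNorm (Gf 0) * frobNorm Z := by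
    simpa [frobNorm_eq_norm, finner_eq_inner] using
      abs_real_inner_le_norm (frobEquiv (Gf 0)) (frobEquiv Z)
  have hZ0 : 0 ≤ frobNorm Z := Real.sqrt_nonneg _
  have hG : frobNorm (Gf 0) * frobNorm Z ≤ frobNorm (Gf 0) * R := by
    gcongr; exact Real.sqrt_nonneg _
  have hsq : Lf / 2 * frobNorm Z ^ 2 ≤ Lf / 2 * R ^ 2 := by gcongr
  rw [sub_zero] at hdesc
  linarith [(abs_le.1 hinner).1]

theorem merit_sub_merit_ge (hgrad : ∀ Z, HasFrobGradientAt f (Gf Z) Z)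
    (hlip : ∀ Z W, frobNorm (Gf Z - Gf W) ≤ Lf * frobNorm (Z - W)) (hβ : Lf ≤ β) (hlam : 0 ≤ lam)
    (hp0 : 0 ≤ p) (hp1 : p ≤ 1) {A B C Y : Matrix (Fin m) (Fin n) ℝ} {e e' : Fin m → ℝ} {α : ℝ}
    (he : ∀ i, 0 < e i) (he' : ∀ i, 0 ≤ e' i) (hle : ∀ i, e' i ≤ e i)
    (hY : Y = B + α • (B - C))
    (hA : surrogate f Gf β lam p B Y e A ≤ surrogate f Gf β lam p B Y e B) :
    (β / 2 - (Lf + β) / 2 * α ^ 2) * frobNorm (B - C) ^ 2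
      ≤ merit f β lam p B C e - merit f β lam p A B e' := by
  have hup := (abs_le.1 (abs_sub_sub_finner_le hgrad hlip Y A)).2
  have hlow := (abs_le.1 (abs_sub_sub_finner_le hgrad hlip Y B)).1
  have hpen := mul_le_mul_of_nonneg_left (sum_rpow_add_le_of_reweighting hp0 hp1
    (sval_nonneg B) (sval_nonneg A) he he' hle) hlam
  have hBY : frobNorm (B - Y) ^ 2 = α ^ 2 * frobNorm (B - C) ^ 2 := by
    rw [hY, show B - (B + α • (B - C)) = -(α • (B - C)) by abel, frobNorm_eq_norm, map_neg,
      norm_neg, map_smul, norm_smul, ← frobNorm_eq_norm, mul_pow, Real.norm_eq_abs, sq_abs]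
  have hBB : frobNorm (B - B) = 0 := by simp [frobNorm]
  have hlin :
      finner (Gf Y) (A - Y) - finner (Gf Y) (B - Y) = finner A (Gf Y) - finner B (Gf Y) := by
    simp only [finner_eq_inner, map_sub, inner_sub_right, real_inner_comm]
    ring
  have hAY : Lf / 2 * frobNorm (A - Y) ^ 2 ≤ β / 2 * frobNorm (A - Y) ^ 2 := by gcongr
  unfold merit surrogate at *
  rw [hBB, hBY] at hA
  rw [hBY] at hlow
  rw [mul_add, mul_sub] at hpen
  linarith

theorem add_penalty_le_merit (hβ : 0 ≤ β) (hlam : 0 ≤ lam) (hp : 0 ≤ p)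
    (A B : Matrix (Fin m) (Fin n) ℝ) {e : Fin m → ℝ} (he : ∀ i, 0 ≤ e i) :
    f A + lam * ∑ i, sval A i ^ p ≤ merit f β lam p A B e := by
  have hsum : ∑ i, sval A i ^ p ≤ ∑ i, (sval A i + e i) ^ p :=
    Finset.sum_le_sum fun i _ =>
      Real.rpow_le_rpow (sval_nonneg A i) (le_add_of_nonneg_right (he i)) hp
  have hdist : 0 ≤ β / 2 * frobNorm (A - B) ^ 2 := by positivity
  unfold merit
  linarith [mul_le_mul_of_nonneg_left hsum hlam]

theorem exists_tendsto_merit_of_antitone (hgrad : ∀ Z, HasFrobGradientAt f (Gf Z) Z)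
    (hlip : ∀ Z W, frobNorm (Gf Z - Gf W) ≤ Lf * frobNorm (Z - W)) (hLf : 0 ≤ Lf)
    (hlevel : ∀ c : ℝ, ∃ R : ℝ, ∀ Z, f Z + lam * ∑ i, sval Z i ^ p ≤ c → frobNorm Z ≤ R)
    (hβ : 0 ≤ β) (hlam : 0 ≤ lam) (hp : 0 ≤ p) {A B : ℕ → Matrix (Fin m) (Fin n) ℝ}
    {e : ℕ → Fin m → ℝ} (he : ∀ k i, 0 ≤ e k i)
    (hanti : Antitone fun k => merit f β lam p (A k) (B k) (e k)) :
    ∃ l, Tendsto (fun k => merit f β lam p (A k) (B k) (e k)) atTop (𝓝 l) := by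
  obtain ⟨R, hR⟩ := hlevel (merit f β lam p (A 0) (B 0) (e 0))
  obtain ⟨M, hM⟩ := bddBelow_image_frobNorm_le hgrad hlip hLf R
  refine ⟨_, tendsto_atTop_ciInf hanti ⟨M, ?_⟩⟩
  rintro _ ⟨k, rfl⟩
  have hF := add_penalty_le_merit (f := f) hβ hlam hp (A k) (B k) (he k)
  have hAk : frobNorm (A k) ≤ R := hR _ (hF.trans (hanti (Nat.zero_le k)))
  have hpen : 0 ≤ lam * ∑ i, sval (A k) i ^ p :=
    mul_nonneg hlam (Finset.sum_nonneg fun i _ => Real.rpow_nonneg (sval_nonneg _ i) p)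
  linarith [hM ⟨A k, hAk, rfl⟩]

end Smooth

end Frobenius

theorem stmt_2_general {m n : ℕ} (p lam Lf β alphabar : ℝ)
    (hp0 : 0 < p) (hp1 : p < 1) (hlam : 0 < lam)
    (hLf : 0 ≤ Lf) (hβ : Lf < β)
    (hab0 : 0 < alphabar) (hab1 : alphabar < Real.sqrt (β / (3 * Lf + β)))
    (f : Matrix (Fin m) (Fin n) ℝ → ℝ)
    (Gf : Matrix (Fin m) (Fin n) ℝ → Matrix (Fin m) (Fin n) ℝ)
    (hgrad : ∀ Z, HasFrobGradientAt f (Gf Z) Z)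
    (hlip : ∀ Z W, frobNorm (Gf Z - Gf W) ≤ Lf * frobNorm (Z - W))
    (hlevel : ∀ cc : ℝ, ∃ R : ℝ, ∀ Z : Matrix (Fin m) (Fin n) ℝ,
      f Z + lam * (∑ i, sval Z i ^ p) ≤ cc → frobNorm Z ≤ R)
    (X Y : ℕ → Matrix (Fin m) (Fin n) ℝ) (ε : ℕ → Fin m → ℝ)
    (hε : ∀ k i, 0 < ε k i) (hεmono : ∀ k i, ε (k + 1) i ≤ ε k i)
    (α : ℕ → ℝ) (hα : ∀ k, α k ∈ Set.Icc 0 alphabar)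
    (hY : ∀ k, Y k = X k + α k • (X k - X (k - 1)))
    (hmin : ∀ k, ∀ Z : Matrix (Fin m) (Fin n) ℝ,
      f (Y k) + finner (X (k + 1)) (Gf (Y k))
          + β / 2 * frobNorm (X (k + 1) - Y k) ^ 2
          + β / 2 * frobNorm (X (k + 1) - X k) ^ 2
          + lam * ∑ i, (p * (sval (X k) i + ε k i) ^ (p - 1)) * sval (X (k + 1)) i
        ≤ f (Y k) + finner Z (Gf (Y k))
          + β / 2 * frobNorm (Z - Y k) ^ 2
          + β / 2 * frobNorm (Z - X k) ^ 2
          + lam * ∑ i, (p * (sval (X k) i + ε k i) ^ (p - 1)) * sval Z i) :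
    0 < β / 2 * (1 - (3 * Lf + β) / β * alphabar ^ 2) ∧
    (∀ k : ℕ,
      β / 2 * (1 - (3 * Lf + β) / β * alphabar ^ 2) * frobNorm (X k - X (k - 1)) ^ 2 ≤
        (f (X k) + β / 2 * frobNorm (X k - X (k - 1)) ^ 2
            + lam * ∑ i, (sval (X k) i + ε k i) ^ p)
        - (f (X (k + 1)) + β / 2 * frobNorm (X (k + 1) - X k) ^ 2
            + lam * ∑ i, (sval (X (k + 1)) i + ε (k + 1) i) ^ p)) ∧
    Antitone (fun k : ℕ => f (X k) + β / 2 * frobNorm (X k - X (k - 1)) ^ 2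
        + lam * ∑ i, (sval (X k) i + ε k i) ^ p) ∧
    ∃ l : ℝ, Filter.Tendsto (fun k : ℕ => f (X k) + β / 2 * frobNorm (X k - X (k - 1)) ^ 2
        + lam * ∑ i, (sval (X k) i + ε k i) ^ p) Filter.atTop (nhds l) := by
  have hβ0 : 0 < β := hLf.trans_lt hβ
  have hC : β / 2 * (1 - (3 * Lf + β) / β * alphabar ^ 2)
      = β / 2 - (3 * Lf + β) / 2 * alphabar ^ 2 := by
    field_simp
  have hαbar : (3 * Lf + β) * alphabar ^ 2 < β := by
    have := (Real.lt_sqrt hab0.le).1 hab1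
    rwa [lt_div_iff₀ (by positivity), mul_comm] at this
  have hCpos : 0 < β / 2 * (1 - (3 * Lf + β) / β * alphabar ^ 2) := by
    rw [hC]
    linarith
  have hstep : ∀ k,
      β / 2 * (1 - (3 * Lf + β) / β * alphabar ^ 2) * frobNorm (X k - X (k - 1)) ^ 2
        ≤ merit f β lam p (X k) (X (k - 1)) (ε k)
          - merit f β lam p (X (k + 1)) (X k) (ε (k + 1)) := by
    intro k
    obtain ⟨hαk0, hαk1⟩ := hα k
    have hcoef : (Lf + β) * α k ^ 2 ≤ (3 * Lf + β) * alphabar ^ 2 :=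
      mul_le_mul (by linarith) (pow_le_pow_left₀ hαk0 hαk1 2) (sq_nonneg _) (by positivity)
    refine le_trans (mul_le_mul_of_nonneg_right ?_ (sq_nonneg _))
      (merit_sub_merit_ge hgrad hlip hβ.le hlam.le hp0.le hp1.le (hε k) (fun i => (hε (k + 1) i).le)
        (hεmono k) (hY k) (hmin k (X k)))
    rw [hC]
    linarith
  have hanti : Antitone fun k => merit f β lam p (X k) (X (k - 1)) (ε k) := by
    refine antitone_nat_of_succ_le fun k => ?_
    have := hstep k
    simp only [Nat.add_sub_cancel]
    linarith [mul_nonneg hCpos.le (sq_nonneg (frobNorm (X k - X (k - 1))))]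
  exact ⟨hCpos, hstep, hanti, exists_tendsto_merit_of_antitone hgrad hlip hLf hlevel
    hβ0.le hlam.le hp0.le (fun k i => (hε k i).le) hanti⟩

/-- Sufficient decrease of the merit function
`H(A, B, e) = f(A) + (β/2)‖A − B‖_F² + λ ∑ᵢ (σᵢ(A) + eᵢ)^p` along the iterates of the
extrapolated iteratively reweighted nuclear norm algorithm:
`H(X^k, X^{k−1}, ε^k) − H(X^{k+1}, X^k, ε^{k+1}) ≥ C ‖X^k − X^{k−1}‖_F²` with
`C = (β/2)(1 − ((3L_f + β)/β) ᾱ²) > 0`; hence `{H(X^k, X^{k−1}, ε^k)}` is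
nonincreasing and converges. (Here `X^{−1} = X^0`, realized by truncated subtraction.) -/
theorem stmt_2 {m n : ℕ} (hmn : m ≤ n) (p lam Lf β alphabar : ℝ)
    (hp0 : 0 < p) (hp1 : p < 1) (hlam : 0 < lam)
    (hLf : 0 ≤ Lf) (hβ : Lf < β)
    (hab0 : 0 < alphabar) (hab1 : alphabar < Real.sqrt (β / (3 * Lf + β)))
    (f : Matrix (Fin m) (Fin n) ℝ → ℝ)
    (Gf : Matrix (Fin m) (Fin n) ℝ → Matrix (Fin m) (Fin n) ℝ)
    (hgrad : ∀ Z, HasFrobGradientAt f (Gf Z) Z)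
    (hlip : ∀ Z W, frobNorm (Gf Z - Gf W) ≤ Lf * frobNorm (Z - W))
    (hlevel : ∀ cc : ℝ, ∃ R : ℝ, ∀ Z : Matrix (Fin m) (Fin n) ℝ,
      f Z + lam * (∑ i, sval Z i ^ p) ≤ cc → frobNorm Z ≤ R)
    (X Y : ℕ → Matrix (Fin m) (Fin n) ℝ) (ε : ℕ → Fin m → ℝ)
    (hε : ∀ k i, 0 < ε k i) (hεmono : ∀ k i, ε (k + 1) i ≤ ε k i)
    (α : ℕ → ℝ) (hα : ∀ k, α k ∈ Set.Icc 0 alphabar)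
    (hY : ∀ k, Y k = X k + α k • (X k - X (k - 1)))
    (hmin : ∀ k, ∀ Z : Matrix (Fin m) (Fin n) ℝ,
      f (Y k) + finner (X (k + 1)) (Gf (Y k))
          + β / 2 * frobNorm (X (k + 1) - Y k) ^ 2
          + β / 2 * frobNorm (X (k + 1) - X k) ^ 2
          + lam * ∑ i, (p * (sval (X k) i + ε k i) ^ (p - 1)) * sval (X (k + 1)) i
        ≤ f (Y k) + finner Z (Gf (Y k))
          + β / 2 * frobNorm (Z - Y k) ^ 2
          + β / 2 * frobNorm (Z - X k) ^ 2
          + lam * ∑ i, (p * (sval (X k) i + ε k i) ^ (p - 1)) * sval Z i) :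
    0 < β / 2 * (1 - (3 * Lf + β) / β * alphabar ^ 2) ∧
    (∀ k : ℕ,
      β / 2 * (1 - (3 * Lf + β) / β * alphabar ^ 2) * frobNorm (X k - X (k - 1)) ^ 2 ≤
        (f (X k) + β / 2 * frobNorm (X k - X (k - 1)) ^ 2
            + lam * ∑ i, (sval (X k) i + ε k i) ^ p)
        - (f (X (k + 1)) + β / 2 * frobNorm (X (k + 1) - X k) ^ 2
            + lam * ∑ i, (sval (X (k + 1)) i + ε (k + 1) i) ^ p)) ∧
    Antitone (fun k : ℕ => f (X k) + β / 2 * frobNorm (X k - X (k - 1)) ^ 2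
        + lam * ∑ i, (sval (X k) i + ε k i) ^ p) ∧
    ∃ l : ℝ, Filter.Tendsto (fun k : ℕ => f (X k) + β / 2 * frobNorm (X k - X (k - 1)) ^ 2
        + lam * ∑ i, (sval (X k) i + ε k i) ^ p) Filter.atTop (nhds l) :=
  stmt_2_general p lam Lf β alphabar hp0 hp1 hlam hLf hβ hab0 hab1 f Gf hgrad hlip hlevel X Y ε hε
    hεmono α hα hY hmin
end

section
/- Let 0 < p < 1 and λ, β, C₁ > 0. Suppose real sequences {σ_k}_{k≥0} ⊆ [0,∞), {ε_k}_{k≥0} ⊆ (0,∞) and {Σ_k}_{k≥0} ⊆ [0, C₁] satisfy, for all k: σ_{k+1} = max(Σ_k − (λ/(2β)) w_k, 0), where w_k = p (σ_k + ε_k)^{p−1}, and σ_{k+1} + ε_{k+1} ≤ σ_k + ε_k. If there exists k̂ with w_{k̂} ≥ 2βC₁/λ, then σ_k = 0 for all k > k̂. -/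
/-- Zero-locking: if the weight `w_k̂ = p (σ_k̂ + ε_k̂)^{p-1}` once exceeds
`2βC₁/λ`, the soft-thresholding recursion `σ_{k+1} = max(Σ_k − (λ/(2β)) w_k, 0)` forces
`σ_k = 0` for all subsequent `k`, the perturbed values `σ_k + ε_k` being nonincreasing. -/
theorem stmt_5 (p lam β C₁ : ℝ) (hp0 : 0 < p) (hp1 : p < 1)
    (hlam : 0 < lam) (hβ : 0 < β) (hC₁ : 0 < C₁)
    (σ ε Sv w : ℕ → ℝ)
    (hσ : ∀ k, 0 ≤ σ k) (hε : ∀ k, 0 < ε k)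
    (hSv : ∀ k, 0 ≤ Sv k ∧ Sv k ≤ C₁)
    (hw : ∀ k, w k = p * (σ k + ε k) ^ (p - 1))
    (hrec : ∀ k, σ (k + 1) = max (Sv k - lam / (2 * β) * w k) 0)
    (hmono : ∀ k, σ (k + 1) + ε (k + 1) ≤ σ k + ε k)
    (khat : ℕ) (hkhat : 2 * β * C₁ / lam ≤ w khat) :
    ∀ k, khat < k → σ k = 0 := by
  have hpos : ∀ k, 0 < σ k + ε k := fun k => add_pos_of_nonneg_of_pos (hσ k) (hε k)
  -- σ+ε nonincreasing from khat on
  have hchain : ∀ m, khat ≤ m → σ m + ε m ≤ σ khat + ε khat := by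
    intro m hm
    induction m with
    | zero => simp_all
    | succ n ih =>
      rcases Nat.lt_or_ge khat (n+1) with h | h
      · exact le_trans (hmono n) (ih (Nat.lt_succ_iff.mp h))
      · have : khat = n + 1 := le_antisymm hm h
        simp [this]
  -- w is ≥ w khat for m ≥ khat
  have hwge : ∀ m, khat ≤ m → w khat ≤ w m := by
    intro m hm
    rw [hw, hw]
    apply mul_le_mul_of_nonneg_left _ hp0.le
    exact Real.rpow_le_rpow_of_nonpos (hpos m) (hchain m hm) (by linarith)
  intro k hk
  obtain ⟨m, rfl⟩ := Nat.exists_eq_add_of_lt hk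
  have hm : khat ≤ khat + m := Nat.le_add_right _ _
  have hC : C₁ ≤ lam / (2 * β) * w (khat + m) := by
    have h1 := le_trans hkhat (hwge _ hm)
    have h2 : 2 * β * C₁ / lam * (lam / (2 * β)) ≤ w (khat + m) * (lam / (2 * β)) :=
      mul_le_mul_of_nonneg_right h1 (by positivity)
    calc C₁ = 2 * β * C₁ / lam * (lam / (2 * β)) := by field_simp
      _ ≤ w (khat + m) * (lam / (2 * β)) := h2
      _ = lam / (2 * β) * w (khat + m) := mul_comm _ _
  rw [hrec]
  have := (hSv (khat + m)).2
  exact max_eq_right (by linarith)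
end

section
/- Let 0 < p < 1 and M > 0, and let s : ℕ → [0,∞) and ε : ℕ → (0,∞) be sequences such that: (a) for every k, if s_k = 0 and p (ε_k)^{p−1} ≥ M, then s_j = 0 for all j > k; and (b) if the set T = {k ∈ ℕ : s_k = 0 and s_{k+1} > 0} is infinite, then inf_{k ∈ T} ε_k = 0. Then there exists K ∈ ℕ such that either s_k = 0 for all k ≥ K, or s_k > 0 for all k ≥ K. -/
open Filter

/-- Stable-support dichotomy: under the zero-locking property (a) and the
perturbation-vanishing property (b) along switches from zero to nonzero, the sequence `s`
is eventually identically zero or eventually strictly positive. -/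
theorem stmt_7 (p M : ℝ) (hp0 : 0 < p) (hp1 : p < 1) (hM : 0 < M)
    (s ε : ℕ → ℝ) (hs : ∀ k, 0 ≤ s k) (hε : ∀ k, 0 < ε k)
    (ha : ∀ k, s k = 0 → M ≤ p * ε k ^ (p - 1) → ∀ j, k < j → s j = 0)
    (hb : {k : ℕ | s k = 0 ∧ 0 < s (k + 1)}.Infinite →
      IsGLB (ε '' {k : ℕ | s k = 0 ∧ 0 < s (k + 1)}) 0) :
    ∃ K : ℕ, (∀ k, K ≤ k → s k = 0) ∨ (∀ k, K ≤ k → 0 < s k) := by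
  set T := {k : ℕ | s k = 0 ∧ 0 < s (k + 1)} with hT
  -- T must be finite
  have hTfin : T.Finite := by
    by_contra hinf
    have hglb := hb hinf
    -- pick δ > 0 with p * δ^(p-1) ≥ M
    set δ : ℝ := (M / p) ^ (1 / (p - 1)) with hδ
    have hMp : 0 < M / p := div_pos hM hp0
    have hδpos : 0 < δ := Real.rpow_pos_of_pos hMp _
    have hδval : δ ^ (p - 1) = M / p := by
      rw [hδ, ← Real.rpow_mul hMp.le,
        one_div_mul_cancel (by linarith : p - 1 ≠ 0), Real.rpow_one]
    -- δ is not a lower bound, so ∃ k ∈ T with ε k < δ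
    have hnotlb : ¬ δ ∈ lowerBounds (ε '' T) := fun h => absurd (hglb.2 h) (by linarith)
    simp only [lowerBounds, Set.mem_setOf_eq, not_forall] at hnotlb
    obtain ⟨y, hy, hyδ⟩ := hnotlb
    obtain ⟨k, hkT, rfl⟩ := hy
    push_neg at hyδ
    have hlt : δ ^ (p - 1) < ε k ^ (p - 1) := by
      exact Real.rpow_lt_rpow_of_neg (hε k) hyδ (by linarith)
    rw [hδval] at hlt
    have hM' : M ≤ p * ε k ^ (p - 1) := by
      have := (div_lt_iff₀' hp0).mp hlt
      linarith
    have := ha k hkT.1 hM' (k + 1) (Nat.lt_succ_self k)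
    exact absurd hkT.2 (by rw [this]; exact lt_irrefl 0)
  -- get bound K beyond which no element of T
  obtain ⟨N, hN⟩ := hTfin.bddAbove
  have hnotT : ∀ k, N < k → k ∉ T := fun k hk hkT => absurd (hN hkT) (not_le.mpr hk)
  by_cases hz : ∃ m, N < m ∧ s m = 0
  · obtain ⟨m, hm, hsm⟩ := hz
    refine ⟨m, Or.inl ?_⟩
    intro k hk
    induction k, hk using Nat.le_induction with
    | base => exact hsm
    | succ n hn ih =>
      by_contra h
      have hpos : 0 < s (n + 1) := lt_of_le_of_ne (hs _) (Ne.symm h)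
      exact hnotT n (lt_of_lt_of_le hm hn) ⟨ih, hpos⟩
  · push_neg at hz
    exact ⟨N + 1, Or.inr fun k hk =>
      lt_of_le_of_ne (hs k) (Ne.symm (hz k (Nat.lt_of_succ_le hk)))⟩
end

section
/- Let D, D₁ > 0, ζ ∈ ℝ, η > 0, and let Φ : [0, η) → [0, ∞) be continuous and concave with Φ(0) = 0, continuously differentiable on (0, η) with Φ'(s) > 0 for all s ∈ (0, η). Let {a_k}_{k≥0} ⊆ [0, ∞) with a_k → 0, let {d_k}_{k≥0} ⊆ [0, ∞) be nonincreasing with d_k → 0, and let {h_k}_{k≥0} ⊆ ℝ with h_k → ζ. Suppose there is k̂ ∈ ℕ such that for all k ≥ k̂: ζ < h_k < ζ + η, h_k − h_{k+1} ≥ D₁ a_k², and Φ'(h_k − ζ) · D · (a_{k−1} + a_k + d_{k−1} − d_k) ≥ 1. Then ∑_{k=0}^∞ a_k < +∞. -/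
open Filter Topology

/-- Abstract finite-length argument under the Kurdyka–Łojasiewicz
inequality: sufficient decrease (`h_k − h_{k+1} ≥ D₁ a_k²`) together with the KL
inequality `Φ'(h_k − ζ) · D · (a_{k−1} + a_k + d_{k−1} − d_k) ≥ 1` for a concave
desingularizing function `Φ` implies `∑ a_k < ∞`. -/
theorem stmt_13 (D D₁ ζ η : ℝ) (hD : 0 < D) (hD₁ : 0 < D₁) (hη : 0 < η)
    (Φ Φ' : ℝ → ℝ)
    (hΦ0 : Φ 0 = 0)
    (hΦnonneg : ∀ s ∈ Set.Ico (0 : ℝ) η, 0 ≤ Φ s)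
    (hΦcont : ContinuousOn Φ (Set.Ico 0 η))
    (hΦconc : ConcaveOn ℝ (Set.Ico 0 η) Φ)
    (hΦderiv : ∀ s ∈ Set.Ioo (0 : ℝ) η, HasDerivAt Φ (Φ' s) s)
    (hΦ'cont : ContinuousOn Φ' (Set.Ioo 0 η))
    (hΦ'pos : ∀ s ∈ Set.Ioo (0 : ℝ) η, 0 < Φ' s)
    (a d h : ℕ → ℝ)
    (ha0 : ∀ k, 0 ≤ a k) (halim : Tendsto a atTop (nhds 0))
    (hd0 : ∀ k, 0 ≤ d k) (hdmono : Antitone d) (hdlim : Tendsto d atTop (nhds 0))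
    (hhlim : Tendsto h atTop (nhds ζ))
    (khat : ℕ)
    (hbound : ∀ k, khat ≤ k → ζ < h k ∧ h k < ζ + η)
    (hdec : ∀ k, khat ≤ k → D₁ * a k ^ 2 ≤ h k - h (k + 1))
    (hKL : ∀ k, khat ≤ k → 1 ≤ Φ' (h k - ζ) * D * (a (k - 1) + a k + (d (k - 1) - d k))) :
    Summable a := by
  -- Setup
  set K := khat + 1 with hK
  set C := D / D₁ with hCdef
  have hC : 0 < C := div_pos hD hD₁
  set Δ : ℕ → ℝ := fun k => Φ (h k - ζ) with hΔdef
  have hmem : ∀ k, khat ≤ k → h k - ζ ∈ Set.Ioo (0 : ℝ) η := by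
    intro k hk
    obtain ⟨h1, h2⟩ := hbound k hk
    exact ⟨by linarith, by linarith⟩
  have hΔnonneg : ∀ k, khat ≤ k → 0 ≤ Δ k := by
    intro k hk
    exact hΦnonneg _ (Set.Ioo_subset_Ico_self (hmem k hk))
  -- Key per-step estimate
  have key : ∀ k, K ≤ k →
      a k ≤ C * (Δ k - Δ (k + 1)) + (a (k - 1) + a k + (d (k - 1) - d k)) / 4 := by
    intro k hk
    have hk0 : khat ≤ k := le_trans (Nat.le_succ khat) hk
    have hk1 : khat ≤ k + 1 := le_trans hk0 (Nat.le_succ k)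
    have hkm : k - 1 ≤ k := Nat.sub_le k 1
    set x := h k - ζ with hx
    set y := h (k + 1) - ζ with hy
    have hxI : x ∈ Set.Ioo (0 : ℝ) η := hmem k hk0
    have hyI : y ∈ Set.Ioo (0 : ℝ) η := hmem (k + 1) hk1
    have hyx : y ≤ x := by
      have := hdec k hk0
      nlinarith [sq_nonneg (a k)]
    set S := a (k - 1) + a k + (d (k - 1) - d k) with hS
    have hS0 : 0 ≤ S := by
      have := hdmono hkm
      have := ha0 (k - 1)
      have := ha0 k
      simp only [hS]; linarith
    have hΦ'x : 0 < Φ' x := hΦ'pos x hxI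
    have hKLk : 1 ≤ Φ' x * D * S := hKL k hk0
    -- concavity: Φ' x * (x - y) ≤ Φ x - Φ y
    have hconc : Φ' x * (x - y) ≤ Φ x - Φ y := by
      rcases eq_or_lt_of_le hyx with heq | hlt
      · rw [heq]; simp
      · have hslope := hΦconc.le_slope_of_hasDerivAt
          (Set.Ioo_subset_Ico_self hyI) (Set.Ioo_subset_Ico_self hxI) hlt
          (hΦderiv x hxI)
        rw [slope_def_field] at hslope
        have hxy0 : 0 < x - y := sub_pos.mpr hlt
        calc Φ' x * (x - y) ≤ (Φ x - Φ y) / (x - y) * (x - y) := by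
              apply mul_le_mul_of_nonneg_right hslope hxy0.le
          _ = Φ x - Φ y := div_mul_cancel₀ _ hxy0.ne'
    have hΔdiff : Φ' x * (x - y) ≤ Δ k - Δ (k + 1) := hconc
    have hΔd0 : 0 ≤ Δ k - Δ (k + 1) := by
      have : 0 ≤ Φ' x * (x - y) := mul_nonneg hΦ'x.le (by linarith)
      linarith
    have hdk : D₁ * a k ^ 2 ≤ x - y := by
      have := hdec k hk0
      simp only [hx, hy]; linarith
    -- a k ^ 2 ≤ C * (Δ k - Δ (k+1)) * S
    have hsq : a k ^ 2 ≤ C * (Δ k - Δ (k + 1)) * S := by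
      have h1 : D₁ * a k ^ 2 * (Φ' x * D * S) ≤ (Δ k - Δ (k + 1)) * (D * S) := by
        have h2 : D₁ * a k ^ 2 * Φ' x ≤ Δ k - Δ (k + 1) := by
          calc D₁ * a k ^ 2 * Φ' x ≤ (x - y) * Φ' x :=
                mul_le_mul_of_nonneg_right hdk hΦ'x.le
            _ = Φ' x * (x - y) := by ring
            _ ≤ _ := hΔdiff
        have hDS : 0 ≤ D * S := mul_nonneg hD.le hS0
        calc D₁ * a k ^ 2 * (Φ' x * D * S) = (D₁ * a k ^ 2 * Φ' x) * (D * S) := by ring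
          _ ≤ (Δ k - Δ (k + 1)) * (D * S) := mul_le_mul_of_nonneg_right h2 hDS
      have h3 : D₁ * a k ^ 2 ≤ (Δ k - Δ (k + 1)) * (D * S) := by
        nlinarith [mul_nonneg (mul_nonneg hD₁.le (sq_nonneg (a k))) (sub_nonneg.mpr hKLk)]
      rw [hCdef]
      rw [div_mul_eq_mul_div, div_mul_eq_mul_div, le_div_iff₀ hD₁]
      nlinarith
    -- AM-GM
    have hrhs : 0 ≤ C * (Δ k - Δ (k + 1)) + S / 4 := by
      have := mul_nonneg hC.le hΔd0
      linarith
    have hsq2 : a k ^ 2 ≤ (C * (Δ k - Δ (k + 1)) + S / 4) ^ 2 := by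
      nlinarith [sq_nonneg (C * (Δ k - Δ (k + 1)) - S / 4)]
    exact (pow_le_pow_iff_left₀ (ha0 k) hrhs two_ne_zero).mp hsq2
  -- Partial sum bound for the shifted sequence
  set M := 2 * ((a (K - 1) + d (K - 1)) / 4 + C * Δ K) with hM
  have hbdd : ∀ n, ∑ j ∈ Finset.range n, a (j + K) ≤ M := by
    intro n
    -- sum the key inequality
    have hsum : ∑ j ∈ Finset.range n, a (j + K) ≤
        C * (Δ K - Δ (n + K)) + (∑ j ∈ Finset.range n, a (j + K - 1)
          + ∑ j ∈ Finset.range n, a (j + K) + (d (K - 1) - d (n + K - 1))) / 4 := by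
      induction n with
      | zero =>
        simp only [Finset.sum_range_zero, Nat.zero_add, sub_self, mul_zero,
          add_zero, zero_add]
        norm_num
      | succ m ih =>
        have hkey := key (m + K) (Nat.le_add_left K m)
        rw [Finset.sum_range_succ, Finset.sum_range_succ]
        have e1 : m + K - 1 = m + K - 1 := rfl
        have e2 : m + 1 + K - 1 = m + K := by omega
        have e3 : m + 1 + K = m + K + 1 := by omega
        rw [e2, e3]
        have hd' : d (m + K - 1) ≤ d (K - 1) := hdmono (by omega)
        -- from ih and hkey
        have : a (m + K) ≤ C * (Δ (m + K) - Δ (m + K + 1)) +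
            (a (m + K - 1) + a (m + K) + (d (m + K - 1) - d (m + K))) / 4 := hkey
        linarith
    -- bound the shifted sums
    have hshift : ∑ j ∈ Finset.range n, a (j + K - 1) ≤
        a (K - 1) + ∑ j ∈ Finset.range n, a (j + K) := by
      cases n with
      | zero => simpa using ha0 (K - 1)
      | succ m =>
        have : ∑ j ∈ Finset.range (m + 1), a (j + K - 1)
            = a (K - 1) + ∑ j ∈ Finset.range m, a (j + K) := by
          rw [Finset.sum_range_succ']
          have e1 : ∀ j : ℕ, j + 1 + K - 1 = j + K := fun j => by omega
          have e2 : (0 : ℕ) + K - 1 = K - 1 := by omega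
          rw [e2, add_comm]
          congr 1
          exact Finset.sum_congr rfl (fun j _ => by rw [e1 j])
        rw [this]
        have : ∑ j ∈ Finset.range m, a (j + K) ≤ ∑ j ∈ Finset.range (m + 1), a (j + K) := by
          rw [Finset.sum_range_succ]
          linarith [ha0 (m + K)]
        linarith
    have hΔK0 : 0 ≤ Δ (n + K) := hΔnonneg _ (by rw [hK]; omega)
    have hdn0 : 0 ≤ d (n + K - 1) := hd0 _
    have hdK0 : 0 ≤ d (K - 1) := hd0 _
    have haK0 : 0 ≤ a (K - 1) := ha0 _
    have hCΔ : 0 ≤ C * Δ (n + K) := mul_nonneg hC.le hΔK0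
    rw [hM]
    linarith
  have hsummable : Summable (fun j => a (j + K)) :=
    summable_of_sum_range_le (fun j => ha0 _) hbdd
  exact (summable_nat_add_iff K).mp hsummable
end

section
/- Let c > 0, D₁ > 0 and ζ ∈ ℝ. Let {h_k} ⊆ ℝ be nonincreasing with h_k → ζ, let {g_k} ⊆ [0, ∞) with g_k → 0, and let {a_k} ⊆ [0, ∞) satisfy h_k − h_{k+1} ≥ D₁ a_k² for all k. Suppose there is K₀ such that for all k ≥ K₀, if h_k > ζ then c · g_k ≥ 1. Then there exists k̂ such that h_k = ζ and a_k = 0 for all k ≥ k̂. -/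
open Filter Topology

/-- Finite termination under the KL inequality with Łojasiewicz
exponent `θ = 0` (linear desingularizing function `Φ(s) = c·s`): if `h` is nonincreasing
with limit `ζ`, `g_k → 0`, `h_k − h_{k+1} ≥ D₁ a_k²`, and `c·g_k ≥ 1` whenever `h_k > ζ`
(for `k ≥ K₀`), then eventually `h_k = ζ` and `a_k = 0`. -/
theorem stmt_14 (c D₁ ζ : ℝ) (hc : 0 < c) (hD₁ : 0 < D₁)
    (h g a : ℕ → ℝ)
    (hhmono : Antitone h) (hhlim : Tendsto h atTop (nhds ζ))
    (hg0 : ∀ k, 0 ≤ g k) (hglim : Tendsto g atTop (nhds 0))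
    (ha0 : ∀ k, 0 ≤ a k)
    (hdec : ∀ k, D₁ * a k ^ 2 ≤ h k - h (k + 1))
    (K₀ : ℕ) (hKL : ∀ k, K₀ ≤ k → ζ < h k → 1 ≤ c * g k) :
    ∃ khat : ℕ, ∀ k, khat ≤ k → h k = ζ ∧ a k = 0 := by
  -- h k ≥ ζ always, since h is antitone with limit ζ
  have hge : ∀ k, ζ ≤ h k := fun k =>
    le_of_tendsto hhlim (Filter.eventually_atTop.2 ⟨k, fun n hn => hhmono hn⟩)
  -- eventually c * g k < 1
  have hev : ∀ᶠ k in atTop, c * g k < 1 := by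
    have : Tendsto (fun k => c * g k) atTop (nhds (c * 0)) := hglim.const_mul c
    rw [mul_zero] at this
    exact this.eventually_lt_const one_pos
  obtain ⟨K₁, hK₁⟩ := Filter.eventually_atTop.1 hev
  refine ⟨max K₀ K₁, fun k hk => ?_⟩
  have hKk : K₀ ≤ k := le_trans (le_max_left _ _) hk
  have hK1k : K₁ ≤ k := le_trans (le_max_right _ _) hk
  have hhk : h k = ζ := by
    by_contra hne
    have : ζ < h k := lt_of_le_of_ne (hge k) (Ne.symm hne)
    exact absurd (hKL k hKk this) (not_le.2 (hK₁ k hK1k))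
  refine ⟨hhk, ?_⟩
  have hhk1 : h (k + 1) = ζ := by
    by_contra hne
    have hlt : ζ < h (k + 1) := lt_of_le_of_ne (hge _) (Ne.symm hne)
    exact absurd (hKL _ (le_trans hKk (Nat.le_succ k)) hlt)
      (not_le.2 (hK₁ _ (le_trans hK1k (Nat.le_succ k))))
  have := hdec k
  rw [hhk, hhk1, sub_self] at this
  have h2 : a k ^ 2 ≤ 0 := by
    by_contra hpos
    push_neg at hpos
    nlinarith
  have : a k ^ 2 = 0 := le_antisymm h2 (sq_nonneg _)
  exact pow_eq_zero_iff (by norm_num) |>.1 this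
end

section
/- Let θ ∈ (0, 1/2], μ ∈ (0,1) and ν₁ > 0. Let {T_k}_{k≥0} ⊆ [0, ∞) be nonincreasing with T_k → 0, and let {d_k}_{k≥0} ⊆ [0, ∞) satisfy d_k ≤ √μ · d_{k−1} for all k ≥ 1. Suppose there is k̂ such that for all k ≥ k̂, T_k ≤ ν₁ (T_{k−2} − T_k + d_{k−1})^{(1−θ)/θ} + (1/2)(T_{k−2} − T_k + d_{k−1}). Then there exist γ ∈ (0,1) and c₀ > 0 such that, with c₁ = √μ/(1 − μ), T_k ≤ c₀ γ^k − c₁ d_k for all sufficiently large k. -/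
open Filter Topology

set_option maxHeartbeats 1000000

/-- Abstract linear convergence rate (Łojasiewicz exponent
`θ ∈ (0, 1/2]`): the recursive inequality
`T_k ≤ ν₁ (T_{k−2} − T_k + d_{k−1})^{(1−θ)/θ} + (1/2)(T_{k−2} − T_k + d_{k−1})`
for the nonincreasing tail sums `T_k → 0` with geometrically decaying perturbations
`d_k ≤ √μ d_{k−1}` yields `T_k ≤ c₀ γ^k − (√μ/(1−μ)) d_k` for all large `k`. -/
theorem stmt_15 (θ μ ν₁ : ℝ) (hθ0 : 0 < θ) (hθ1 : θ ≤ 1 / 2)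
    (hμ0 : 0 < μ) (hμ1 : μ < 1) (hν₁ : 0 < ν₁)
    (T d : ℕ → ℝ)
    (hT0 : ∀ k, 0 ≤ T k) (hTmono : Antitone T) (hTlim : Tendsto T atTop (nhds 0))
    (hd0 : ∀ k, 0 ≤ d k) (hdgeo : ∀ k, 1 ≤ k → d k ≤ Real.sqrt μ * d (k - 1))
    (khat : ℕ)
    (hrec : ∀ k, khat ≤ k →
      T k ≤ ν₁ * (T (k - 2) - T k + d (k - 1)) ^ ((1 - θ) / θ)
        + 1 / 2 * (T (k - 2) - T k + d (k - 1))) :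
    ∃ γ ∈ Set.Ioo (0 : ℝ) 1, ∃ c₀ > (0 : ℝ), ∃ K : ℕ, ∀ k, K ≤ k →
      T k ≤ c₀ * γ ^ k - Real.sqrt μ / (1 - μ) * d k := by
  set s := Real.sqrt μ with hs
  have hs0 : 0 < s := Real.sqrt_pos.mpr hμ0
  have hs2 : s ^ 2 = μ := Real.sq_sqrt hμ0.le
  have hs1 : s < 1 := by nlinarith
  clear_value s
  -- d decays geometrically
  have hdpow : ∀ k, d k ≤ s ^ k * d 0 := by
    intro k
    induction k with
    | zero => simp
    | succ n ih =>
      have h1 := hdgeo (n + 1) (by omega)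
      simp only [Nat.add_sub_cancel] at h1
      calc d (n + 1) ≤ s * d n := h1
        _ ≤ s * (s ^ n * d 0) := by nlinarith [hd0 n]
        _ = s ^ (n + 1) * d 0 := by ring
  have hdlim : Tendsto d atTop (nhds 0) := by
    apply squeeze_zero hd0 hdpow
    simpa using (tendsto_pow_atTop_nhds_zero_of_lt_one hs0.le hs1).mul_const (d 0)
  have hxlim : Tendsto (fun k => T (k - 2) - T k + d (k - 1)) atTop (nhds 0) := by
    have h1 : Tendsto (fun k : ℕ => T (k - 2)) atTop (nhds 0) :=
      hTlim.comp (tendsto_sub_atTop_nat 2)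
    have h2 : Tendsto (fun k : ℕ => d (k - 1)) atTop (nhds 0) :=
      hdlim.comp (tendsto_sub_atTop_nat 1)
    simpa using (h1.sub hTlim).add h2
  have hx1 : ∀ᶠ k in atTop, T (k - 2) - T k + d (k - 1) ≤ 1 := by
    filter_upwards [hxlim.eventually_le_const (by norm_num : (0:ℝ) < 1)] with k hk
    exact hk
  obtain ⟨K₁, hK₁⟩ := eventually_atTop.mp hx1
  set β : ℝ := ν₁ + 1 / 2 with hβdef
  have hβ0 : 0 < β := by positivity
  set r : ℝ := β / (1 + β) with hrdef
  have hr0 : 0 < r := by positivity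
  have hr1 : r < 1 := by
    rw [hrdef, div_lt_one (by linarith)]; linarith
  set K : ℕ := max khat K₁ + 2 with hK
  -- key linear recursion
  have hTr : ∀ k, K ≤ k → T k ≤ r * (T (k - 2) + d (k - 1)) := by
    intro k hk
    set x : ℝ := T (k - 2) - T k + d (k - 1) with hxdef
    have hx0 : 0 ≤ x := by
      have h1 := hTmono (show k - 2 ≤ k by omega)
      have h2 := hd0 (k - 1)
      simp only [hxdef]; linarith
    have hxle1 : x ≤ 1 := hK₁ k (by omega)
    have hp1 : 1 ≤ (1 - θ) / θ := by
      rw [le_div_iff₀ hθ0]; linarith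
    have hpow : x ^ ((1 - θ) / θ) ≤ x := by
      rcases eq_or_lt_of_le hx0 with h | h
      · rw [← h, Real.zero_rpow (by positivity)]
      · calc x ^ ((1 - θ) / θ) ≤ x ^ (1 : ℝ) :=
              Real.rpow_le_rpow_of_exponent_ge h hxle1 hp1
          _ = x := Real.rpow_one x
    have hr := hrec k (by omega)
    rw [← hxdef] at hr
    have hβx : T k ≤ β * x := by rw [hβdef]; nlinarith [mul_le_mul_of_nonneg_left hpow hν₁.le]
    have hstep : (1 + β) * T k ≤ β * (T (k - 2) + d (k - 1)) := by
      simp only [hxdef] at hβx; nlinarith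
    rw [hrdef, div_mul_eq_mul_div, le_div_iff₀ (by linarith : (0:ℝ) < 1 + β)]
    nlinarith
  set γ : ℝ := Real.sqrt (μ + r * (1 - μ)) with hγdef
  have hγq : 0 < μ + r * (1 - μ) := by nlinarith
  have hγ2 : γ ^ 2 = μ + r * (1 - μ) := Real.sq_sqrt hγq.le
  have hγ0 : 0 < γ := Real.sqrt_pos.mpr hγq
  have hq1 : μ + r * (1 - μ) < 1 := by nlinarith
  have hγ1 : γ < 1 := by nlinarith [hγ2, hγ0, hq1]
  clear_value γ
  set c₁ : ℝ := s / (1 - μ) with hc₁def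
  have hc₁0 : 0 < c₁ := by
    apply div_pos hs0; linarith
  have hc₁μ' : c₁ * (1 - μ) = s := by
    rw [hc₁def, div_mul_cancel₀ _ (ne_of_gt (by linarith : (0:ℝ) < 1 - μ))]
  clear_value c₁
  set E : ℕ → ℝ := fun k => T k + c₁ * d k with hEdef
  have hE0 : ∀ k, 0 ≤ E k := fun k => by
    have := hT0 k; have := hd0 k; simp only [hEdef]; nlinarith
  have hErec : ∀ k, K ≤ k → E k ≤ γ ^ 2 * E (k - 2) := by
    intro k hk
    have h1 := hTr k hk
    have h2 := hdgeo k (by omega)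
    have h3 := hdgeo (k - 1) (by omega)
    have he : k - 1 - 1 = k - 2 := by omega
    rw [he] at h3
    have hT2 : 0 ≤ T (k - 2) := hT0 (k - 2)
    have hd2 : 0 ≤ d (k - 2) := hd0 (k - 2)
    have hd1 : 0 ≤ d (k - 1) := hd0 (k - 1)
    -- γ² c₁ = c₁ μ + r s = (r + c₁ s) s
    have key : (r + c₁ * s) * s = γ ^ 2 * c₁ := by
      rw [hγ2]; nlinarith [hc₁μ']
    simp only [hEdef]
    have step1 : T k + c₁ * d k ≤ r * T (k - 2) + (r + c₁ * s) * d (k - 1) := by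
      nlinarith
    have step2 : (r + c₁ * s) * d (k - 1) ≤ (r + c₁ * s) * (s * d (k - 2)) := by
      apply mul_le_mul_of_nonneg_left h3; nlinarith
    have hrγ : r ≤ γ ^ 2 := by rw [hγ2]; nlinarith
    nlinarith [mul_le_mul_of_nonneg_right hrγ hT2]
  set C : ℝ := max (max (E K / γ ^ K) (E (K + 1) / γ ^ (K + 1))) 1 with hCdef
  have hC1 : (1 : ℝ) ≤ C := le_max_right _ _
  have claim : ∀ n, E (K + n) ≤ C * γ ^ (K + n) := by
    intro n
    induction n using Nat.strong_induction_on with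
    | _ n ih =>
      match n, ih with
      | 0, _ => 
        have h : E K / γ ^ K ≤ C := le_trans (le_max_left _ _) (le_max_left _ _)
        have hγK : (0:ℝ) < γ ^ K := by positivity
        rw [div_le_iff₀ hγK] at h
        simpa using h
      | 1, _ =>
        have h : E (K + 1) / γ ^ (K + 1) ≤ C :=
          le_trans (le_max_right _ _) (le_max_left _ _)
        have hγK : (0:ℝ) < γ ^ (K + 1) := by positivity
        rw [div_le_iff₀ hγK] at h
        exact h
      | (m + 2), ih =>
        have hrec2 := hErec (K + (m + 2)) (by omega)
        have he : K + (m + 2) - 2 = K + m := by omega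
        rw [he] at hrec2
        have ihm := ih m (by omega)
        calc E (K + (m + 2)) ≤ γ ^ 2 * E (K + m) := hrec2
          _ ≤ γ ^ 2 * (C * γ ^ (K + m)) := by
              apply mul_le_mul_of_nonneg_left ihm; positivity
          _ = C * γ ^ (K + (m + 2)) := by ring
  refine ⟨γ, ⟨hγ0, hγ1⟩, C, by linarith, K, ?_⟩
  intro k hk
  have h := claim (k - K)
  rw [show K + (k - K) = k by omega] at h
  simp only [hEdef] at h
  linarith
end

section
/- Let θ ∈ (1/2, 1), μ ∈ (0,1) and ν₁ > 0. Let {T_k}_{k≥0} ⊆ [0, ∞) be nonincreasing with T_k → 0, and let {d_k}_{k≥0} ⊆ [0, ∞) satisfy d_k ≤ √μ · d_{k−1} for all k ≥ 1. Suppose there is k̂ such that for all k ≥ k̂, T_k ≤ ν₁ (T_{k−2} − T_k + d_{k−1})^{(1−θ)/θ} + (1/2)(T_{k−2} − T_k + d_{k−1}). Then there exists d₀ > 0 such that, with d₁ = √μ/(1 − μ), T_k ≤ d₀ k^{−(1−θ)/(2θ−1)} − d₁ d_k for all sufficiently large k. -/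
open Filter Topology

/-- Bernoulli inequality for nonpositive real exponents. -/
lemma stmt16_bern_neg {x p : ℝ} (hx : 0 < x) (hp : p ≤ 0) :
    1 + p * (x - 1) ≤ x ^ p := by
  rw [Real.rpow_def_of_pos hx, mul_comm (Real.log x) p]
  have h1 : p * (x - 1) ≤ p * Real.log x :=
    mul_le_mul_of_nonpos_left (Real.log_le_sub_one_of_pos hx) hp
  have h2 := Real.add_one_le_exp (p * Real.log x)
  linarith

/-- Gradient inequality for the convex function `x ↦ x^(1-σ)`, `σ > 1`. -/
lemma stmt16_grad {a b σ : ℝ} (ha : 0 < a) (hab : a ≤ b) (hσ : 1 < σ) :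
    b ^ (1 - σ) + (σ - 1) * b ^ (-σ) * (b - a) ≤ a ^ (1 - σ) := by
  have hb : 0 < b := lt_of_lt_of_le ha hab
  have hber := stmt16_bern_neg (x := a / b) (p := 1 - σ) (by positivity) (by linarith)
  have hbp : (0:ℝ) < b ^ (1 - σ) := Real.rpow_pos_of_pos hb _
  have hmul := mul_le_mul_of_nonneg_right hber hbp.le
  have hdiv : (a / b) ^ (1 - σ) * b ^ (1 - σ) = a ^ (1 - σ) := by
    rw [Real.div_rpow ha.le hb.le, div_mul_cancel₀]
    exact hbp.ne'
  rw [hdiv] at hmul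
  have hbb : b ^ (1 - σ) = b ^ (-σ) * b := by
    rw [show (1 - σ) = -σ + 1 by ring, Real.rpow_add hb, Real.rpow_one]
  calc b ^ (1 - σ) + (σ - 1) * b ^ (-σ) * (b - a)
      = (1 + (1 - σ) * (a / b - 1)) * b ^ (1 - σ) := by
        rw [hbb]; field_simp; ring
    _ ≤ a ^ (1 - σ) := hmul

set_option maxHeartbeats 1000000 in
/-- Abstract sublinear convergence rate (Łojasiewicz exponent
`θ ∈ (1/2, 1)`): the recursive inequality
`T_k ≤ ν₁ (T_{k−2} − T_k + d_{k−1})^{(1−θ)/θ} + (1/2)(T_{k−2} − T_k + d_{k−1})`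
for the nonincreasing tail sums `T_k → 0` with geometrically decaying perturbations
`d_k ≤ √μ d_{k−1}` yields `T_k ≤ d₀ k^{−(1−θ)/(2θ−1)} − (√μ/(1−μ)) d_k` for large `k`. -/
theorem stmt_16 (θ μ ν₁ : ℝ) (hθ0 : 1 / 2 < θ) (hθ1 : θ < 1)
    (hμ0 : 0 < μ) (hμ1 : μ < 1) (hν₁ : 0 < ν₁)
    (T d : ℕ → ℝ)
    (hT0 : ∀ k, 0 ≤ T k) (hTmono : Antitone T) (hTlim : Tendsto T atTop (nhds 0))
    (hd0 : ∀ k, 0 ≤ d k) (hdgeo : ∀ k, 1 ≤ k → d k ≤ Real.sqrt μ * d (k - 1))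
    (khat : ℕ)
    (hrec : ∀ k, khat ≤ k →
      T k ≤ ν₁ * (T (k - 2) - T k + d (k - 1)) ^ ((1 - θ) / θ)
        + 1 / 2 * (T (k - 2) - T k + d (k - 1))) :
    ∃ d₀ > (0 : ℝ), ∃ K : ℕ, ∀ k, K ≤ k →
      T k ≤ d₀ * (k : ℝ) ^ (-(1 - θ) / (2 * θ - 1)) - Real.sqrt μ / (1 - μ) * d k := by
  have hθp : 0 < θ := by linarith
  have hθm : 0 < 1 - θ := by linarith
  have h2θ : 0 < 2 * θ - 1 := by linarith
  have hμm : 0 < 1 - μ := by linarith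
  set β : ℝ := (1 - θ) / θ with hβ_def
  have hβ0 : 0 < β := by positivity
  have hβ1 : β < 1 := by
    rw [hβ_def, div_lt_one hθp]; linarith
  set σ : ℝ := θ / (1 - θ) with hσ_def
  have hσ : 1 < σ := by
    rw [hσ_def, lt_div_iff₀ hθm]; linarith
  have hβσ : β * σ = 1 := by
    rw [hβ_def, hσ_def]; field_simp
  -- square root facts
  have hsμ0 : 0 < Real.sqrt μ := Real.sqrt_pos.mpr hμ0
  have hsμ1 : Real.sqrt μ < 1 := by
    rw [show (1:ℝ) = Real.sqrt 1 by simp]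
    exact Real.sqrt_lt_sqrt hμ0.le hμ1
  have hsμsq : Real.sqrt μ * Real.sqrt μ = μ := Real.mul_self_sqrt hμ0.le
  set c : ℝ := Real.sqrt μ / (1 - μ) with hc_def
  have hc : 0 < c := div_pos hsμ0 hμm
  have hc1 : c * (1 - μ) = Real.sqrt μ := div_mul_cancel₀ _ hμm.ne'
  -- the combined sequence S
  set S : ℕ → ℝ := fun k => T k + c * d k with hS_def
  have hS0 : ∀ k, 0 ≤ S k := fun k => by
    have h1 := hd0 k; have h2 := hT0 k
    simp only [hS_def]
    nlinarith
  have hdstep : ∀ n : ℕ, d (n + 1) ≤ Real.sqrt μ * d n := by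
    intro n
    simpa using hdgeo (n + 1) (by omega)
  have hdmono : Antitone d := antitone_nat_of_succ_le (fun n => by
    nlinarith [hdstep n, hd0 n, hd0 (n+1)])
  have hSmono : Antitone S := fun a b hab => by
    simp only [hS_def]
    have h1 := hTmono hab
    have h2 := hdmono hab
    nlinarith
  -- d tends to 0
  have hdlim : Tendsto d atTop (nhds 0) := by
    have hgeom : ∀ k, d k ≤ (Real.sqrt μ) ^ k * d 0 := by
      intro k
      induction k with
      | zero => simp
      | succ n ih =>
        calc d (n + 1) ≤ Real.sqrt μ * d n := hdstep n
          _ ≤ Real.sqrt μ * ((Real.sqrt μ) ^ n * d 0) :=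
              mul_le_mul_of_nonneg_left ih hsμ0.le
          _ = (Real.sqrt μ) ^ (n+1) * d 0 := by ring
    have hlim0 : Tendsto (fun k : ℕ => (Real.sqrt μ) ^ k * d 0) atTop (nhds 0) := by
      have := tendsto_pow_atTop_nhds_zero_of_lt_one hsμ0.le hsμ1
      simpa using this.mul_const (d 0)
    exact squeeze_zero hd0 hgeom hlim0
  have hSlim : Tendsto S atTop (nhds 0) := by
    have := hTlim.add ((hdlim.const_mul c))
    simpa [hS_def] using this
  set C₂ : ℝ := 1 / 2 + μ / (1 - μ) with hC₂_def
  have hC₂half : C₂ - 1 / 2 = μ / (1 - μ) := by rw [hC₂_def]; ring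
  have hC₂ : 0 < C₂ := by
    have : 0 < μ / (1 - μ) := div_pos hμ0 hμm
    rw [hC₂_def]; linarith
  -- key recursion for S
  have hkey : ∀ m : ℕ, khat ≤ m + 2 →
      S (m + 2) ≤ ν₁ * (S m - S (m + 2)) ^ β + C₂ * (S m - S (m + 2)) := by
    intro m hm
    have hrec' := hrec (m + 2) hm
    have e1 : m + 2 - 2 = m := by omega
    have e2 : m + 2 - 1 = m + 1 := by omega
    rw [e1, e2] at hrec'
    set Δ : ℝ := T m - T (m + 2) + d (m + 1) with hΔ_def
    set E : ℝ := S m - S (m + 2) with hE_def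
    have hTm : T (m + 2) ≤ T m := hTmono (by omega)
    have hΔ0 : 0 ≤ Δ := by
      have := hd0 (m + 1); rw [hΔ_def]; linarith
    have hd1 : d (m + 1) ≤ Real.sqrt μ * d m := hdstep m
    have hd2 : d (m + 2) ≤ Real.sqrt μ * d (m + 1) := hdstep (m + 1)
    have hd2' : d (m + 2) ≤ μ * d m := by
      nlinarith [hd0 (m+1), hd0 m]
    have hcd2 : c * d (m + 2) ≤ c * (μ * d m) := mul_le_mul_of_nonneg_left hd2' hc.le
    have hcsplit : c * d m - c * (μ * d m) = Real.sqrt μ * d m := by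
      rw [← hc1]; ring
    have hEexp : E = T m + c * d m - (T (m + 2) + c * d (m + 2)) := by
      simp only [hE_def, hS_def]
    have hE1 : Real.sqrt μ * d m ≤ E := by
      rw [hEexp]; linarith
    have hEΔ : Δ ≤ E := by
      rw [hΔ_def, hEexp]; linarith
    have hE0 : 0 ≤ E := le_trans hΔ0 hEΔ
    have hpow : Δ ^ β ≤ E ^ β := Real.rpow_le_rpow hΔ0 hEΔ hβ0.le
    have hcd3 : c * d (m + 2) ≤ (C₂ - 1 / 2) * E := by
      rw [hC₂half]
      have h4 : c * (μ * d m) = μ / (1 - μ) * (Real.sqrt μ * d m) := by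
        rw [hc_def]; ring
      have h5 : μ / (1 - μ) * (Real.sqrt μ * d m) ≤ μ / (1 - μ) * E :=
        mul_le_mul_of_nonneg_left hE1 (div_pos hμ0 hμm).le
      linarith
    have hSeq : S (m + 2) = T (m + 2) + c * d (m + 2) := rfl
    have hν₁pow : ν₁ * Δ ^ β ≤ ν₁ * E ^ β := mul_le_mul_of_nonneg_left hpow hν₁.le
    rw [hSeq]
    calc T (m + 2) + c * d (m + 2)
        ≤ (ν₁ * E ^ β + 1 / 2 * E) + (C₂ - 1 / 2) * E := by linarith
      _ = ν₁ * E ^ β + C₂ * E := by ring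
  -- choose N with S ≤ 1 beyond N
  obtain ⟨N, hN⟩ : ∃ N : ℕ, ∀ k, N ≤ k → S k ≤ 1 := by
    have := hSlim.eventually_lt_const (show (0:ℝ) < 1 by norm_num)
    rw [eventually_atTop] at this
    obtain ⟨N, hN⟩ := this
    exact ⟨N, fun k hk => (hN k hk).le⟩
  set K₂ : ℕ := max N khat + 2 with hK₂_def
  set C₃ : ℝ := (ν₁ + C₂) ^ σ with hC₃_def
  have hC₃ : 0 < C₃ := Real.rpow_pos_of_pos (by linarith) _
  -- power form of the recursion
  have hkey2 : ∀ m : ℕ, K₂ ≤ m + 2 → S (m + 2) ^ σ ≤ C₃ * (S m - S (m + 2)) := by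
    intro m hm
    have hmN : N ≤ m := by omega
    have hmk : khat ≤ m + 2 := by omega
    have h := hkey m hmk
    set E : ℝ := S m - S (m + 2) with hE_def
    have hE0 : 0 ≤ E := by
      have := hSmono (show m ≤ m + 2 by omega); rw [hE_def]; linarith
    have hE1 : E ≤ 1 := by
      have := hS0 (m + 2); have := hN m hmN; rw [hE_def]; linarith
    rcases eq_or_lt_of_le hE0 with hE0' | hE0'
    · have hz : E ^ β = 0 := by
        rw [← hE0', Real.zero_rpow hβ0.ne']
      rw [hz] at h
      have hS2' : S (m + 2) = 0 := le_antisymm (by rw [← hE0'] at h; linarith) (hS0 _)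
      rw [hS2', ← hE0', Real.zero_rpow (by positivity : σ ≠ 0)]
      simp
    · have hEβ : E ≤ E ^ β := by
        have := Real.rpow_le_rpow_of_exponent_ge hE0' hE1 hβ1.le
        rwa [Real.rpow_one] at this
      have h2 : S (m + 2) ≤ (ν₁ + C₂) * E ^ β := by nlinarith
      have h3 : S (m + 2) ^ σ ≤ ((ν₁ + C₂) * E ^ β) ^ σ :=
        Real.rpow_le_rpow (hS0 _) h2 (by linarith)
      have h4 : ((ν₁ + C₂) * E ^ β) ^ σ = C₃ * E := by
        rw [Real.mul_rpow (by linarith) (Real.rpow_nonneg hE0 _),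
          ← Real.rpow_mul hE0, hβσ, Real.rpow_one, hC₃_def]
      rw [h4] at h3
      exact h3
  -- the per-step decrease of S^(1-σ)
  set c₀ : ℝ := min ((σ - 1) * (2:ℝ) ^ (-σ) / C₃) (1 - (2:ℝ) ^ (1 - σ)) with hc₀_def
  have hc₀ : 0 < c₀ := by
    rw [hc₀_def]
    apply lt_min
    · have : (0:ℝ) < (2:ℝ) ^ (-σ) := Real.rpow_pos_of_pos (by norm_num) _
      exact div_pos (by nlinarith) hC₃
    · have : (2:ℝ) ^ (1 - σ) < 1 :=
        Real.rpow_lt_one_of_one_lt_of_neg (by norm_num) (by linarith)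
      linarith
  have hstep : ∀ m : ℕ, K₂ ≤ m + 2 → 0 < S (m + 2) →
      S m ^ (1 - σ) + c₀ ≤ S (m + 2) ^ (1 - σ) := by
    intro m hm hpos
    set a : ℝ := S (m + 2) with ha_def
    set b : ℝ := S m with hb_def
    have hab : a ≤ b := hSmono (show m ≤ m + 2 by omega)
    have hb0 : 0 < b := lt_of_lt_of_le hpos hab
    have hb1 : b ≤ 1 := hN m (by omega)
    have hk2 := hkey2 m hm
    rcases le_or_gt b (2 * a) with hcase | hcase
    · -- flat case: use the gradient inequality
      have hgrad := stmt16_grad hpos hab hσ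
      have hba : a ^ σ / C₃ ≤ b - a := by
        rw [div_le_iff₀ hC₃]; linarith [hk2]
      have hbneg : (2 * a) ^ (-σ) ≤ b ^ (-σ) :=
        Real.rpow_le_rpow_of_nonpos (by linarith) hcase (by linarith)
      have h2a : (2 * a) ^ (-σ) = (2:ℝ) ^ (-σ) * a ^ (-σ) :=
        Real.mul_rpow (by norm_num) hpos.le
      have haa : a ^ (-σ) * a ^ σ = 1 := by
        rw [← Real.rpow_add hpos]; simp
      have hstep1 : (σ - 1) * ((2:ℝ) ^ (-σ) * a ^ (-σ)) * (a ^ σ / C₃)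
          ≤ (σ - 1) * b ^ (-σ) * (b - a) := by
        apply mul_le_mul
        · apply mul_le_mul_of_nonneg_left _ (by linarith)
          rw [← h2a]; exact hbneg
        · exact hba
        · positivity
        · have : (0:ℝ) ≤ b ^ (-σ) := (Real.rpow_pos_of_pos hb0 _).le
          nlinarith
      have hval : (σ - 1) * ((2:ℝ) ^ (-σ) * a ^ (-σ)) * (a ^ σ / C₃)
          = (σ - 1) * (2:ℝ) ^ (-σ) / C₃ := by
        calc (σ - 1) * ((2:ℝ) ^ (-σ) * a ^ (-σ)) * (a ^ σ / C₃)
            = (σ - 1) * (2:ℝ) ^ (-σ) / C₃ * (a ^ (-σ) * a ^ σ) := by ring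
          _ = (σ - 1) * (2:ℝ) ^ (-σ) / C₃ := by rw [haa, mul_one]
      have hmin : c₀ ≤ (σ - 1) * (2:ℝ) ^ (-σ) / C₃ := min_le_left _ _
      rw [hval] at hstep1
      have hchain := le_trans hmin hstep1
      nlinarith [hgrad, hchain]
    · -- sharp decrease case
      have hb2a : b ^ (1 - σ) ≤ (2 * a) ^ (1 - σ) :=
        Real.rpow_le_rpow_of_nonpos (by linarith) hcase.le (by linarith)
      have h2a : (2 * a) ^ (1 - σ) = (2:ℝ) ^ (1 - σ) * a ^ (1 - σ) :=
        Real.mul_rpow (by norm_num) hpos.le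
      have ha1 : (1:ℝ) ≤ a ^ (1 - σ) :=
        Real.one_le_rpow_of_pos_of_le_one_of_nonpos hpos (le_trans hab hb1) (by linarith)
      have h2s1 : (2:ℝ) ^ (1 - σ) < 1 :=
        Real.rpow_lt_one_of_one_lt_of_neg (by norm_num) (by linarith)
      have h2s0 : (0:ℝ) < (2:ℝ) ^ (1 - σ) := Real.rpow_pos_of_pos (by norm_num) _
      have hmin : c₀ ≤ 1 - (2:ℝ) ^ (1 - σ) := min_le_right _ _
      nlinarith [hb2a, h2a, ha1]
  -- telescoping
  have hind : ∀ n m : ℕ, K₂ ≤ m → 0 < S (m + 2 * n) →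
      S m ^ (1 - σ) + n * c₀ ≤ S (m + 2 * n) ^ (1 - σ) := by
    intro n
    induction n with
    | zero => intro m _ _; simp
    | succ n ih =>
      intro m hm hpos
      have he : m + 2 * (n + 1) = (m + 2 * n) + 2 := by omega
      rw [he] at hpos ⊢
      have hpos' : 0 < S (m + 2 * n) :=
        lt_of_lt_of_le hpos (hSmono (show m + 2 * n ≤ m + 2 * n + 2 by omega))
      have h1 := ih m hm hpos'
      have h2 := hstep (m + 2 * n) (by omega) hpos
      push_cast
      push_cast at h1
      linarith
  -- final assembly
  set α : ℝ := (1 - θ) / (2 * θ - 1) with hα_def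
  have hα0 : 0 < α := div_pos hθm h2θ
  have hexp : -(1 - θ) / (2 * θ - 1) = -α := by rw [hα_def, neg_div]
  have h1σ : 1 - σ = -((2 * θ - 1) / (1 - θ)) := by
    rw [hσ_def]; field_simp; ring
  have h1σ0 : 1 - σ < 0 := by linarith
  have hinv : (1 - σ)⁻¹ = -α := by
    rw [h1σ, inv_neg, inv_div, hα_def]
  refine ⟨(c₀ / 4) ^ (-α), Real.rpow_pos_of_pos (by linarith) _, 2 * K₂ + 4, ?_⟩
  intro k hk
  have hk0 : (0:ℝ) < (k:ℝ) := by
    have : 0 < k := by omega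
    exact_mod_cast this
  have hgoal : S k ≤ (c₀ / 4) ^ (-α) * (k:ℝ) ^ (-α) → 
      T k ≤ (c₀ / 4) ^ (-α) * (k:ℝ) ^ (-(1 - θ) / (2 * θ - 1)) - Real.sqrt μ / (1 - μ) * d k := by
    intro h
    rw [hexp]
    have hSkdef : S k = T k + Real.sqrt μ / (1 - μ) * d k := by
      simp only [hS_def, hc_def]
    linarith [h, hSkdef.le, hSkdef.ge]
  apply hgoal
  clear_value β σ c S C₂ C₃ c₀ α
  rcases eq_or_lt_of_le (hS0 k) with hSk | hSk
  · rw [← hSk]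
    positivity
  · -- positive case: use the telescoping bound
    set m : ℕ := K₂ + (k - K₂) % 2 with hm_def
    set n : ℕ := (k - K₂) / 2 with hn_def
    have hkmn : m + 2 * n = k := by omega
    have hmK : K₂ ≤ m := by omega
    have hpos : 0 < S (m + 2 * n) := by rw [hkmn]; exact hSk
    have h1 := hind n m hmK hpos
    rw [hkmn] at h1
    have hSm : 0 < S m := lt_of_lt_of_le hSk (hSmono (show m ≤ k by omega))
    have hSmq : 0 < S m ^ (1 - σ) := Real.rpow_pos_of_pos hSm _
    have hn4 : k ≤ 4 * n := by omega
    have hn4' : c₀ / 4 * (k:ℝ) ≤ (n:ℝ) * c₀ := by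
      have : (k:ℝ) ≤ 4 * (n:ℝ) := by exact_mod_cast hn4
      nlinarith
    have hA0 : 0 < c₀ / 4 * (k:ℝ) := by positivity
    have hle : c₀ / 4 * (k:ℝ) ≤ S k ^ (1 - σ) := by linarith
    have h2 : (S k ^ (1 - σ)) ^ (1 - σ)⁻¹ ≤ (c₀ / 4 * (k:ℝ)) ^ (1 - σ)⁻¹ :=
      Real.rpow_le_rpow_of_nonpos hA0 hle (by rw [hinv]; linarith)
    rw [Real.rpow_rpow_inv hSk.le (by linarith : (1:ℝ) - σ ≠ 0)] at h2
    rw [hinv] at h2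
    rw [Real.mul_rpow (by linarith : (0:ℝ) ≤ c₀ / 4) hk0.le] at h2
    exact h2
end
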